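/- For I of even cardinality, M_I = (1/(n+1)) [ (n+2−|I|)( (1/2)η − Σ_{i∈I} M_{{i}} ) + (|I|−1) Σ_{j∈I^c} M_{{j}} ], where M_{{i}} denotes M_I with I = {i}. -/

import Mathlib

/-!
Write `E = Σ_j ε_j` and `ε_I = Σ_{i∈I} ε_i`. Then `M_{i} = η/4 − E/2 + ε_i`, and for `|I|` even
`M_I = η/4 + E/2 − ε_I`; moreover `Σ_{j∈Iᶜ} ε_j = E − ε_I` and `|Iᶜ| = n + 3 − |I|`. Both sides of the
identity are therefore combinations of `η`, `E` and `ε_I`, and comparing the three coefficients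
leaves identities between rational functions of `|I|` and `n`.
-/

open Finset

/-- The class `η` in the orthogonal basis `{η, ε_1, …, ε_{n+3}}`, `n = 2m`. -/
noncomputable def eta (m : ℕ) : ℝ × (Fin (2*m+3) → ℝ) := (1, 0)

noncomputable def eps (m : ℕ) (i : Fin (2*m+3)) : ℝ × (Fin (2*m+3) → ℝ) :=
  (0, Pi.single i 1)

/-- The class `M_I := (1/4)η + ((-1)^{|I|}/2)(Σ_{j∉I} ε_j − Σ_{i∈I} ε_i)`. -/
noncomputable def Mcl (m : ℕ) (I : Finset (Fin (2*m+3))) : ℝ × (Fin (2*m+3) → ℝ) :=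
  (1/4, fun j => ((-1 : ℝ)^I.card / 2) * (if j ∈ I then -1 else 1))

/-- The intersection form: orthogonal basis with `η² = 4`, `ε_i² = (-1)^m`. -/
noncomputable def Bf (m : ℕ) (x y : ℝ × (Fin (2*m+3) → ℝ)) : ℝ :=
  4 * x.1 * y.1 + (-1 : ℝ)^m * ∑ i, x.2 i * y.2 i

lemma fst_sum_eps (m : ℕ) (s : Finset (Fin (2*m+3))) : (∑ i ∈ s, eps m i).1 = 0 := by
  simp [Prod.fst_sum, eps]

lemma snd_sum_eps_apply (m : ℕ) (s : Finset (Fin (2*m+3))) (j : Fin (2*m+3)) :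
    (∑ i ∈ s, eps m i).2 j = if j ∈ s then 1 else 0 := by
  simp [Prod.snd_sum, Finset.sum_apply, eps, Pi.single_apply]

lemma Mcl_eq (m : ℕ) (I : Finset (Fin (2*m+3))) :
    Mcl m I = (1/4 : ℝ) • eta m
      + ((-1 : ℝ)^I.card / 2) • (∑ j, eps m j - (2 : ℝ) • ∑ i ∈ I, eps m i) := by
  ext j
  · simp [Mcl, eta, fst_sum_eps]
  · by_cases hj : j ∈ I <;> simp [Mcl, eta, snd_sum_eps_apply, hj]; ring

lemma Mcl_singleton (m : ℕ) (i : Fin (2*m+3)) :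
    Mcl m {i} = (1/4 : ℝ) • eta m - (1/2 : ℝ) • ∑ j, eps m j + eps m i := by
  rw [Mcl_eq]
  simp only [card_singleton, pow_one, sum_singleton]
  module

lemma Mcl_of_even (m : ℕ) {I : Finset (Fin (2*m+3))} (hI : Even I.card) :
    Mcl m I = (1/4 : ℝ) • eta m + (1/2 : ℝ) • ∑ j, eps m j - ∑ i ∈ I, eps m i := by
  rw [Mcl_eq, hI.neg_one_pow]
  module

lemma sum_Mcl_singleton (m : ℕ) (s : Finset (Fin (2*m+3))) :
    ∑ i ∈ s, Mcl m {i} = ((s.card : ℝ) / 4) • eta m - ((s.card : ℝ) / 2) • ∑ j, eps m j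
      + ∑ i ∈ s, eps m i := by
  simp only [Mcl_singleton, sum_add_distrib, sum_sub_distrib, sum_const, ← Nat.cast_smul_eq_nsmul ℝ,
    smul_smul]
  ring_nf

theorem stmt_8_general (m : ℕ) (I : Finset (Fin (2*m+3))) (hI : Even I.card) :
    Mcl m I = (1/(2*(m:ℝ)+1)) •
      (((2*(m:ℝ)+2) - I.card) • ((1/2 : ℝ) • eta m - ∑ i ∈ I, Mcl m {i})
        + ((I.card : ℝ) - 1) • ∑ j ∈ Iᶜ, Mcl m {j}) := by
  have hcompl : (Iᶜ.card : ℝ) = 2 * m + 3 - I.card := by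
    rw [card_compl, Fintype.card_fin, Nat.cast_sub (card_le_univ I |>.trans_eq (Fintype.card_fin _))]
    push_cast; ring
  have hsum_compl : ∑ i ∈ Iᶜ, eps m i = ∑ j, eps m j - ∑ i ∈ I, eps m i :=
    eq_sub_of_add_eq (sum_compl_add_sum I _)
  rw [Mcl_of_even m hI, sum_Mcl_singleton, sum_Mcl_singleton, hcompl, hsum_compl]
  have hden : (2 * (m : ℝ) + 1) ≠ 0 := by positivity
  match_scalars <;> field_simp <;> ring

/-- For `I` of even cardinality,
`M_I = (1/(n+1))[(n+2−|I|)((1/2)η − Σ_{i∈I} M_{i}) + (|I|−1) Σ_{j∈I^c} M_{j}]`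
where `n = 2m`. -/
theorem stmt_8 (m : ℕ) (hm : 1 ≤ m) (I : Finset (Fin (2*m+3))) (hI : Even I.card) :
    Mcl m I = (1/(2*(m:ℝ)+1)) •
      (((2*(m:ℝ)+2) - I.card) • ((1/2 : ℝ) • eta m - ∑ i ∈ I, Mcl m {i})
        + ((I.card : ℝ) - 1) • ∑ j ∈ Iᶜ, Mcl m {j}) :=
  stmt_8_general m I hI
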